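/- If L ⊆ Σ* is recursively enumerable, then there is a constant c_L such that for all n, C(λ_{1:n} | n) ≤ log n + c_L, where λ is the characteristic sequence of L. -/

import Mathlib

/-- Plain conditional Kolmogorov complexity `C(x|y)` relative to the machine `φ`:
the length of a shortest program `p` with `φ p y = x`. -/
noncomputable def kolC (φ : List Bool → List Bool → Part (List Bool)) (x y : List Bool) : ℕ :=
  sInf {n | ∃ p : List Bool, p.length = n ∧ x ∈ φ p y}

/-- Unconditional Kolmogorov complexity `C(x) = C(x|ε)`. -/
noncomputable def kolCp (φ : List Bool → List Bool → Part (List Bool)) (x : List Bool) : ℕ :=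
  kolC φ x []

/-- `φ` is a universal partial computable function: it is partial computable and
simulates every partial computable `ψ` with at most constant overhead in program length. -/
def IsUniversal (φ : List Bool → List Bool → Part (List Bool)) : Prop :=
  Partrec₂ φ ∧ ∀ ψ : List Bool → List Bool → Part (List Bool), Partrec₂ ψ →
    ∃ c : ℕ, ∀ p y x, x ∈ ψ p y → ∃ q : List Bool, x ∈ φ q y ∧ q.length ≤ p.length + c

/-- The `k`-th binary string in length-lexicographic order, giving the fixed computable
enumeration `vᵢ = natToStr (i-1)` of `{0,1}*`; `(natToStr n).length` is the binary length
`log n` of `n`. -/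
def natToStr (n : ℕ) : List Bool := (Nat.bits (n + 1)).reverse.tail

open Classical in
/-- The length-`n` prefix `λ_{1:n}` of the characteristic sequence of `L`. -/
noncomputable def lamPrefix (L : Language Bool) (n : ℕ) : List Bool :=
  (List.range n).map fun i => if natToStr i ∈ L then true else false

/-!
Given `n`, the prefix `λ_{1:n}` is determined by the number `k ≤ n` of its ones: run the
enumeration of `L` until `k` of the first `n` strings have appeared. The stages only ever add
elements of `L`, so at that stage the approximation is exactly `λ_{1:n}`. The program is
`natToStr k`, no longer than `natToStr n`, and universality costs only an additive constant.
-/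

theorem kolC_le_length {φ : List Bool → List Bool → Part (List Bool)} {x y p : List Bool}
    (h : x ∈ φ p y) : kolC φ x y ≤ p.length :=
  Nat.sInf_le ⟨p, rfl, h⟩

theorem IsUniversal.exists_kolC_le {φ ψ : List Bool → List Bool → Part (List Bool)}
    (hφ : IsUniversal φ) (hψ : Partrec₂ ψ) :
    ∃ c : ℕ, ∀ p y x, x ∈ ψ p y → kolC φ x y ≤ p.length + c := by
  obtain ⟨c, hc⟩ := hφ.2 ψ hψ
  refine ⟨c, fun p y x hx => ?_⟩
  obtain ⟨q, hq, hlen⟩ := hc p y x hx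
  exact (kolC_le_length hq).trans hlen

namespace Nat

theorem bits_eq_cons (n : ℕ) (hn : n ≠ 0) : n.bits = n.bodd :: (n / 2).bits := by
  have hne : n.bits ≠ [] := by
    rw [← List.length_pos_iff, size_eq_bits_len]; exact size_pos.2 (Nat.pos_of_ne_zero hn)
  rw [bodd_eq_bits_head, ← div2_val, div2_bits_eq_tail]
  cases h : n.bits with
  | nil => exact absurd h hne
  | cons b l => rfl

theorem bits_getLast {n : ℕ} (hn : n.bits ≠ []) : n.bits.getLast hn = true := by
  have hd : digits 2 n ≠ [] := by simpa [digits_two_eq_bits] using hn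
  have := getLast_digit_ne_zero 2 (digits_ne_nil_iff_ne_zero.1 hd)
  simp only [digits_two_eq_bits, List.getLast_map] at this
  revert this; cases n.bits.getLast hn <;> simp

theorem bits_injective : Function.Injective bits := fun m n h =>
  digits.injective 2 (by rw [digits_two_eq_bits, digits_two_eq_bits, h])

end Nat

namespace Primrec

theorem nat_bits : Primrec Nat.bits := by
  have h : Primrec₂ fun (_ : Unit) (n : ℕ) => n.bits := by
    refine nat_strong_rec _ (g := fun _ IH =>
      some (if IH.length = 0 then [] else IH.length.bodd :: IH.getD (IH.length / 2) [])) ?_ ?_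
    · refine option_some.comp (ite ?_ (const []) ?_)
      · exact Primrec.eq.comp (list_length.comp snd) (const 0)
      · exact list_cons.comp (nat_bodd.comp (list_length.comp snd))
          ((list_getD []).comp snd (nat_div.comp (list_length.comp snd) (const 2)))
    · intro _ n
      rcases eq_or_ne n 0 with rfl | hn
      · simp
      · have : n / 2 < n := Nat.div_lt_self (Nat.pos_of_ne_zero hn) one_lt_two
        simp [hn, Nat.bits_eq_cons n hn, this]
  exact h.comp (const ()) Primrec.id

theorem list_countP {α β : Type*} [Primcodable α] [Primcodable β] {f : α → List β}
    {p : α → β → Bool} (hf : Primrec f) (hp : Primrec₂ p) :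
    Primrec fun a => (f a).countP (p a) := by
  refine (list_foldr hf (const 0) (nat_add.comp (snd.comp snd)
    (cond (hp.comp fst (fst.comp snd)) (const 1) (const 0))).to₂).of_eq fun a => ?_
  induction f a with
  | nil => rfl
  | cons b l ih => simp [List.countP_cons, ih]

end Primrec

theorem bits_succ_eq_natToStr (n : ℕ) : (n + 1).bits = (natToStr n).reverse ++ [true] := by
  have hne : (n + 1).bits ≠ [] := by
    rw [← List.length_pos_iff, Nat.size_eq_bits_len]; exact Nat.size_pos.2 n.succ_pos
  conv_lhs => rw [← List.dropLast_append_getLast hne, Nat.bits_getLast hne]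
  simp [natToStr]

theorem natToStr_injective : Function.Injective natToStr := fun m n h => by
  have : (m + 1).bits = (n + 1).bits := by rw [bits_succ_eq_natToStr, bits_succ_eq_natToStr, h]
  simpa using Nat.bits_injective this

theorem length_natToStr (n : ℕ) : (natToStr n).length = (n + 1).size - 1 := by
  rw [← Nat.size_eq_bits_len, bits_succ_eq_natToStr]; simp

theorem monotone_length_natToStr : Monotone fun n => (natToStr n).length := fun m n h => by
  simp only [length_natToStr]; exact Nat.sub_le_sub_right (Nat.size_le_size (by omega)) 1

theorem Primrec.natToStr : Primrec natToStr :=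
  list_tail.comp (list_reverse.comp (nat_bits.comp succ))

open Nat.Partrec Code in
theorem REPred.exists_primrec_stages {α : Type*} [Primcodable α] {p : α → Prop}
    (hp : REPred p) :
    ∃ s : ℕ → α → Bool, Primrec₂ s ∧ (∀ a, Monotone (s · a)) ∧ ∀ a, p a ↔ ∃ t, s t a := by
  obtain ⟨c, hc⟩ := exists_code.1 hp
  have hdom : ∀ a, (eval c (Encodable.encode a)).Dom ↔ p a := fun a => by
    simp [hc, Encodable.encodek, Part.assert]
  refine ⟨fun t a => (evaln t c (Encodable.encode a)).isSome, ?_, ?_, ?_⟩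
  · exact Primrec.option_isSome.comp (primrec_evaln.comp
      ((Primrec.fst.pair (Primrec.const c)).pair (Primrec.encode.comp Primrec.snd)))
  · intro a t t' h
    simp only [Bool.le_iff_imp, Option.isSome_iff_exists]
    exact fun ⟨x, hx⟩ => ⟨x, evaln_mono h hx⟩
  · intro a
    simp only [← hdom, Part.dom_iff_mem, evaln_complete, Option.isSome_iff_exists]
    exact ⟨fun ⟨x, t, h⟩ => ⟨t, x, h⟩, fun ⟨t, x, h⟩ => ⟨x, t, h⟩⟩

theorem List.map_eq_map_of_countP_le {α : Type*} {f g : α → Bool} {l : List α}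
    (hfg : ∀ a, f a → g a) (h : l.countP g ≤ l.countP f) : l.map f = l.map g := by
  have hfilter : l.filter f = l.filter g := by
    refine (l.monotone_filter_right hfg).eq_of_length_le ?_
    simpa only [List.countP_eq_length_filter] using h
  refine List.map_congr_left fun a ha => ?_
  cases hga : g a
  · exact Bool.eq_false_iff.2 fun hfa => by simp [hfg a hfa] at hga
  · have : a ∈ l.filter f := hfilter ▸ List.mem_filter.2 ⟨ha, hga⟩
    exact (List.mem_filter.1 this).2

theorem exists_stage_map_eq {α : Type*} {s : ℕ → α → Bool} {p : α → Prop} [DecidablePred p]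
    (hmono : ∀ a, Monotone (s · a)) (hspec : ∀ a, p a ↔ ∃ t, s t a)
    (l : List α) : ∃ t, l.map (s t) = l.map fun a => decide (p a) := by
  have hev : ∀ a ∈ {a | a ∈ l}, ∀ᶠ t in Filter.atTop, s t a = decide (p a) := by
    intro a _
    by_cases hpa : p a
    · obtain ⟨t₀, ht₀⟩ := (hspec a).1 hpa
      exact Filter.eventually_atTop.2 ⟨t₀, fun t ht => by
        simpa [hpa] using Bool.le_iff_imp.1 (hmono a ht) ht₀⟩
    · exact Filter.Eventually.of_forall fun t => by
        simpa [hpa] using mt (fun h => (hspec a).2 ⟨t, h⟩) hpa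
  obtain ⟨t, ht⟩ := ((Filter.eventually_all_finite l.finite_toSet).2 hev).exists
  exact ⟨t, List.map_congr_left fun a ha => ht a ha⟩

def preimageSearch {α : Type*} [DecidableEq α] (f : ℕ → α) (y : α) : Part ℕ :=
  Nat.rfind fun m => Part.some (decide (f m = y))

theorem mem_preimageSearch {α : Type*} [DecidableEq α] {f : ℕ → α}
    (hf : Function.Injective f) (n : ℕ) : n ∈ preimageSearch f (f n) := by
  have hdom : (preimageSearch f (f n)).Dom := Nat.rfind_dom.2 ⟨n, by simp, fun _ => trivial⟩
  have hm := Part.get_mem hdom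
  have heq : f ((preimageSearch f (f n)).get hdom) = f n := by simpa using Nat.rfind_spec hm
  rwa [hf heq] at hm

theorem Primrec.partrec_preimageSearch {α : Type*} [Primcodable α] [DecidableEq α]
    {f : ℕ → α} (hf : Primrec f) : Partrec (preimageSearch f) :=
  Partrec.rfind
    (PrimrecRel.comp Primrec.eq (hf.comp Primrec.snd) Primrec.fst).decide.to_comp.partrec.to₂

/-- Reads `n` off `y = natToStr n` and `k` off the program `p = natToStr k`, then runs the
stages `s` until `k` of the indices `i < n` have appeared. -/
def decompress (s : ℕ → ℕ → Bool) (p y : List Bool) : Part (List Bool) :=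
  (preimageSearch natToStr y).bind fun n => (preimageSearch natToStr p).bind fun k =>
    (Nat.rfind fun t => Part.some (decide (k ≤ (List.range n).countP (s t)))).map
      fun t => (List.range n).map (s t)

theorem Primrec₂.partrec₂_decompress {s : ℕ → ℕ → Bool} (hs : Primrec₂ s) :
    Partrec₂ (decompress s) := by
  have hsearch := Primrec.natToStr.partrec_preimageSearch
  have hrange : Primrec fun w : (((List Bool × List Bool) × ℕ) × ℕ) × ℕ => List.range w.1.1.2 :=
    Primrec.list_range.comp (Primrec.snd.comp (Primrec.fst.comp Primrec.fst))
  have hstage : Primrec₂ fun (w : (((List Bool × List Bool) × ℕ) × ℕ) × ℕ) (i : ℕ) => s w.2 i :=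
    (hs.comp (Primrec.snd.comp Primrec.fst) Primrec.snd).to₂
  have hcountP : Primrec fun w : (((List Bool × List Bool) × ℕ) × ℕ) × ℕ =>
      (List.range w.1.1.2).countP (s w.2) :=
    Primrec.list_countP hrange hstage
  have hcount : Primrec fun w : (((List Bool × List Bool) × ℕ) × ℕ) × ℕ =>
      decide (w.1.2 ≤ (List.range w.1.1.2).countP (s w.2)) :=
    (PrimrecRel.comp Primrec.nat_le (Primrec.snd.comp Primrec.fst) hcountP).decide
  have happrox : Primrec fun w : (((List Bool × List Bool) × ℕ) × ℕ) × ℕ =>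
      (List.range w.1.1.2).map (s w.2) :=
    Primrec.list_map hrange hstage
  have hrfind : Partrec fun z : ((List Bool × List Bool) × ℕ) × ℕ =>
      Nat.rfind fun t => Part.some (decide (z.2 ≤ (List.range z.1.2).countP (s t))) :=
    Partrec.rfind hcount.to_comp.partrec.to₂
  have hinner : Partrec₂ fun (z : (List Bool × List Bool) × ℕ) (k : ℕ) =>
      (Nat.rfind fun t => Part.some (decide (k ≤ (List.range z.2).countP (s t)))).map
        fun t => (List.range z.2).map (s t) :=
    (hrfind.map happrox.to_comp.to₂).to₂
  have houter : Partrec₂ fun (x : List Bool × List Bool) (n : ℕ) =>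
      (preimageSearch natToStr x.1).bind fun k =>
        (Nat.rfind fun t => Part.some (decide (k ≤ (List.range n).countP (s t)))).map
          fun t => (List.range n).map (s t) :=
    ((hsearch.comp (Computable.fst.comp Computable.fst)).bind hinner).to₂
  exact (hsearch.comp Computable.snd).bind houter

theorem map_mem_decompress {s : ℕ → ℕ → Bool} {p : ℕ → Prop} [DecidablePred p]
    (hmono : ∀ i, Monotone (s · i)) (hspec : ∀ i, p i ↔ ∃ t, s t i) (n : ℕ) :
    (List.range n).map (fun i => decide (p i)) ∈
      decompress s (natToStr ((List.range n).countP fun i => decide (p i))) (natToStr n) := by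
  set k := (List.range n).countP fun i => decide (p i)
  obtain ⟨t₀, ht₀⟩ := exists_stage_map_eq hmono hspec (List.range n)
  have hdom : (Nat.rfind fun t => Part.some (decide (k ≤ (List.range n).countP (s t)))).Dom := by
    refine Nat.rfind_dom.2 ⟨t₀, ?_, fun _ => trivial⟩
    simpa [k, List.countP_map, Function.comp_def] using (congrArg (List.countP id) ht₀).ge
  have ht := Part.get_mem hdom
  have hcount := Nat.rfind_spec ht
  refine Part.mem_bind (mem_preimageSearch natToStr_injective n)
    (Part.mem_bind (mem_preimageSearch natToStr_injective k) ?_)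
  have hstage : (List.range n).map (s _) = (List.range n).map fun i => decide (p i) :=
    List.map_eq_map_of_countP_le (fun i h => decide_eq_true ((hspec i).2 ⟨_, h⟩))
      (by simpa using hcount)
  exact hstage ▸ Part.mem_map (fun t => (List.range n).map (s t)) ht

/-- Barzdin (i): if `L` is recursively enumerable then there is a constant `c` with
`C(λ_{1:n} | n) ≤ log n + c` for all `n`. -/
theorem kc_re_upper (φ : List Bool → List Bool → Part (List Bool))
    (hφ : IsUniversal φ) (L : Language Bool) (hL : REPred (· ∈ L)) :
    ∃ c : ℕ, ∀ n : ℕ,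
      kolC φ (lamPrefix L n) (natToStr n) ≤ (natToStr n).length + c := by
  classical
  obtain ⟨s, hs, hmono, hspec⟩ :=
    REPred.exists_primrec_stages (p := fun i => natToStr i ∈ L) (hL.comp Primrec.natToStr.to_comp)
  obtain ⟨c, hc⟩ := hφ.exists_kolC_le hs.partrec₂_decompress
  refine ⟨c, fun n => ?_⟩
  set k := (List.range n).countP fun i => decide (natToStr i ∈ L)
  have hkn : k ≤ n := List.countP_le_length.trans_eq List.length_range
  have hx : lamPrefix L n ∈ decompress s (natToStr k) (natToStr n) := by
    simpa [lamPrefix] using map_mem_decompress hmono hspec n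
  calc kolC φ (lamPrefix L n) (natToStr n) ≤ (natToStr k).length + c := hc _ _ _ hx
    _ ≤ (natToStr n).length + c := by gcongr; exact monotone_length_natToStr hkn
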